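/- Let T be a finite plane tree with n ≥ 2 vertices, with mirrored enumeration w_0 = ∅, w_1, …, w_{n−1}, let ι : T∖{∅} → (rot T)° be the unique lexicographic-order-preserving bijection onto the internal vertices of rot T, and let r_1, …, r_{n−1} be the rightmost enumeration of (rot T)°. Then ι(w_i) = r_i for all 1 ≤ i ≤ n−1. -/

import Mathlib

inductive PTree : Type
  | node : List PTree → PTree

namespace PTree

instance : Inhabited PTree := ⟨node []⟩

mutual
def size : PTree → ℕ
  | node ts => 1 + sizeList ts
def sizeList : List PTree → ℕ
  | [] => 0
  | t :: ts => size t + sizeList ts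
end

def deg : PTree → ℕ
  | node ts => ts.length

mutual
def degreesAux : PTree → List ℕ
  | node ts => ts.length :: degreesListAux ts
def degreesListAux : List PTree → List ℕ
  | [] => []
  | t :: ts => degreesAux t ++ degreesListAux ts
end

mutual
def heightsAux : PTree → ℕ → List ℕ
  | node ts, d => d :: heightsListAux ts (d + 1)
def heightsListAux : List PTree → ℕ → List ℕ
  | [], _ => []
  | t :: ts, d => heightsAux t d ++ heightsListAux ts d
end

mutual
def contourAux : PTree → ℕ → List ℕ
  | node ts, d => d :: contourListAux ts (d + 1)
def contourListAux : List PTree → ℕ → List ℕ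
  | [], _ => []
  | t :: ts, d => contourAux t d ++ (d - 1) :: contourListAux ts d
end

mutual
def verticesAux : PTree → List ℕ → List (List ℕ)
  | node ts, p => p :: verticesListAux ts p 0
def verticesListAux : List PTree → List ℕ → ℕ → List (List ℕ)
  | [], _, _ => []
  | t :: ts, p, i => verticesAux t (p ++ [i]) ++ verticesListAux ts p (i + 1)
end

def vertices (T : PTree) : List (List ℕ) := verticesAux T []

/-- Height process of a plane tree. -/
def H (T : PTree) (k : ℕ) : ℕ := (heightsAux T 0).getD k 0

/-- Contour process of a plane tree. -/
def C (T : PTree) (k : ℕ) : ℕ := (contourAux T 0).getD k 0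

/-- Łukasiewicz walk of a plane tree. -/
def S (T : PTree) (k : ℕ) : ℤ :=
  (((degreesAux T).take k).map (fun d => (d : ℤ) - 1)).sum

def subtreeAt : List ℕ → PTree → Option PTree
  | [], t => some t
  | i :: p, node ts => (ts[i]?).bind (subtreeAt p)

def isInternal (T : PTree) (p : List ℕ) : Bool :=
  match subtreeAt p T with
  | some (node (_ :: _)) => true
  | _ => false

def isVertex (T : PTree) (p : List ℕ) : Bool := (subtreeAt p T).isSome

def rot : PTree → PTree
  | node [] => node []
  | node (t :: ts) => node [rot t, rot (node ts)]

mutual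
def corot : PTree → PTree
  | node ts => corotAux ts (node [])
def corotAux : List PTree → PTree → PTree
  | [], acc => acc
  | t :: ts, acc => corotAux ts (node [acc, corot t])
end

mutual
def mirror : PTree → PTree
  | node ts => node (mirrorList ts)
def mirrorList : List PTree → List PTree
  | [] => []
  | t :: ts => mirrorList ts ++ [mirror t]
end

mutual
def internalTree : PTree → PTree
  | node ts => node (internalList ts)
def internalList : List PTree → List PTree
  | [] => []
  | node [] :: ts => internalList ts
  | t :: ts => internalTree t :: internalList ts
end

def mirrorPath : PTree → List ℕ → List ℕ
  | _, [] => []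
  | node ts, i :: p =>
      (ts.length - 1 - i) ::
        (match ts[i]? with
         | some t => mirrorPath t p
         | none => p)

def lexLt : List ℕ → List ℕ → Bool
  | _, [] => false
  | [], _ :: _ => true
  | a :: as, b :: bs => if a < b then true else if a = b then lexLt as bs else false

def nonRootVertices (T : PTree) : List (List ℕ) := (vertices T).tail

def internalVertices (T : PTree) : List (List ℕ) :=
  (vertices T).filter (fun p => isInternal T p)

/-- the order-preserving identification between non-root vertices of `T` and
internal vertices of `rot T`. -/
def iota (T : PTree) (u : List ℕ) : List ℕ :=
  (internalVertices (rot T)).getD ((nonRootVertices T).idxOf u) []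

/-- `L(u)`: number of edges grafted on the left of the ancestral line of `u`. -/
def Lnum (T : PTree) (u : List ℕ) : ℕ :=
  ((vertices T).filter (fun w =>
      !w.isEmpty && (w.dropLast.isPrefixOf u && w.dropLast != u)
        && !(w.isPrefixOf u && w != u) && lexLt w u)).length

/-- mirrored enumeration of `T`. -/
def mirroredEnum (T : PTree) (k : ℕ) : List ℕ :=
  mirrorPath (mirror T) ((vertices (mirror T)).getD k [])

def descendR (T : PTree) : ℕ → List ℕ → List ℕ
  | 0, p => p
  | fuel + 1, p => if isInternal T (p ++ [1]) then descendR T fuel (p ++ [1]) else p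

def ascend (visited : List (List ℕ)) : ℕ → List ℕ → List ℕ
  | 0, p => p.dropLast
  | fuel + 1, p => if p.dropLast ∈ visited then ascend visited fuel p.dropLast else p.dropLast

def rightmostSeq (T : PTree) : ℕ → List (List ℕ)
  | 0 => []
  | k + 1 =>
      let prev := rightmostSeq T k
      let next :=
        match prev.getLast? with
        | none => descendR T (size T) []
        | some p =>
            if isInternal T (p ++ [0]) then descendR T (size T) (p ++ [0])
            else ascend prev (size T) p
      prev ++ [next]

def Hstar (T : PTree) (k : ℕ) : ℤ :=
  if k = 0 ∨ size T ≤ k then 0 else ((iota T (mirroredEnum T k)).length : ℤ)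

end PTree

open PTree

namespace PTreeAux

open PTree

/-! ### Basic size lemmas -/

theorem size_node (ts : List PTree) : size (node ts) = 1 + sizeList ts := by
  rw [size]

theorem sizeList_cons (t : PTree) (ts : List PTree) :
    sizeList (t :: ts) = size t + sizeList ts := by rw [sizeList]

theorem size_pos : ∀ t : PTree, 1 ≤ size t
  | .node ts => by rw [size_node]; omega

theorem sizeList_append : ∀ (xs ys : List PTree),
    sizeList (xs ++ ys) = sizeList xs + sizeList ys
  | [], ys => by simp [sizeList]
  | x :: xs, ys => by
    simp only [List.cons_append, sizeList_cons, sizeList_append xs ys]; omega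

mutual
theorem size_mirror : ∀ t : PTree, size (mirror t) = size t
  | .node ts => by rw [mirror, size_node, size_node, sizeList_mirrorList ts]
theorem sizeList_mirrorList : ∀ ts : List PTree, sizeList (mirrorList ts) = sizeList ts
  | [] => rfl
  | t :: ts => by
    rw [mirrorList, sizeList_append, sizeList_cons, sizeList_mirrorList ts,
      sizeList_cons, size_mirror t, sizeList]
    omega
end

theorem sizeList_of_mem : ∀ (ts : List PTree) (t : PTree), t ∈ ts → size t ≤ sizeList ts
  | [], t, h => by simp at h
  | s :: ts, t, h => by
    rcases List.mem_cons.1 h with h | h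
    · subst h; rw [sizeList_cons]; omega
    · have := sizeList_of_mem ts t h
      rw [sizeList_cons]; omega

/-! ### subtreeAt lemmas -/

theorem subtreeAt_append : ∀ (p q : List ℕ) (t : PTree),
    subtreeAt (p ++ q) t = (subtreeAt p t).bind (subtreeAt q)
  | [], q, t => by simp [subtreeAt]
  | i :: p, q, .node ts => by
    rw [List.cons_append, subtreeAt, subtreeAt]
    cases h : ts[i]? with
    | none => simp
    | some c => simp [subtreeAt_append p q c]

theorem subtreeAt_size : ∀ (p : List ℕ) (B t : PTree), subtreeAt p B = some t → size t ≤ size B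
  | [], B, t, h => by simp [subtreeAt] at h; rw [h]
  | i :: p, .node ts, t, h => by
    rw [subtreeAt] at h
    cases hc : ts[i]? with
    | none => rw [hc] at h; simp at h
    | some c =>
      rw [hc] at h
      have h1 : size t ≤ size c := subtreeAt_size p c t h
      have h2 : size c ≤ sizeList ts := sizeList_of_mem ts c (List.mem_of_getElem? hc)
      rw [size_node]; omega

end PTreeAux

namespace PTreeAux
open PTree

/-! ### vertices lemmas -/

mutual
theorem vshift : ∀ (t : PTree) (p : List ℕ),
    verticesAux t p = (verticesAux t []).map (p ++ ·)
  | .node ts, p => by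
    rw [verticesAux, verticesAux, vshiftL ts p 0, vshiftL ts [] 0]
    simp [Function.comp, List.map_map]
theorem vshiftL : ∀ (ts : List PTree) (p : List ℕ) (i : ℕ),
    verticesListAux ts p i = (verticesListAux ts [] i).map (p ++ ·)
  | [], p, i => by simp [verticesListAux]
  | t :: ts, p, i => by
    rw [verticesListAux, verticesListAux, vshiftL ts p (i+1), vshiftL ts [] (i+1)]
    simp only [List.nil_append]
    rw [vshift t (p ++ [i]), vshift t [i]]
    simp [List.map_map, Function.comp, List.append_assoc]
end

mutual
theorem length_verticesAux : ∀ (t : PTree) (p : List ℕ),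
    (verticesAux t p).length = size t
  | .node ts, p => by
    rw [verticesAux, size_node, List.length_cons, length_vla ts p 0]; omega
theorem length_vla : ∀ (ts : List PTree) (p : List ℕ) (i : ℕ),
    (verticesListAux ts p i).length = sizeList ts
  | [], p, i => rfl
  | t :: ts, p, i => by
    rw [verticesListAux, sizeList_cons, List.length_append,
      length_verticesAux t (p ++ [i]), length_vla ts p (i+1)]
end

def inc : List ℕ → List ℕ
  | [] => []
  | j :: u => (j + 1) :: u

theorem vla_shift : ∀ (ts : List PTree) (i : ℕ),
    verticesListAux ts [] (i + 1) = (verticesListAux ts [] i).map inc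
  | [], i => rfl
  | t :: ts, i => by
    rw [verticesListAux, verticesListAux, vla_shift ts (i+1)]
    simp only [List.nil_append]
    rw [vshift t [i+1], vshift t [i]]
    simp only [List.map_append, List.map_map]
    congr 1

theorem mem_vla : ∀ (ts : List PTree) (i : ℕ) (w : List ℕ), w ∈ verticesListAux ts [] i →
    ∃ j x t', ts[j]? = some t' ∧ x ∈ verticesAux t' [] ∧ w = (i + j) :: x
  | [], i, w, h => by simp [verticesListAux] at h
  | t :: ts, i, w, h => by
    rw [verticesListAux, List.mem_append] at h
    simp only [List.nil_append] at h
    rcases h with h | h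
    · rw [vshift t [i], List.mem_map] at h
      obtain ⟨x, hx, hw⟩ := h
      refine ⟨0, x, t, by simp, hx, ?_⟩
      rw [← hw]; simp
    · obtain ⟨j, x, t', h1, h2, h3⟩ := mem_vla ts (i+1) w h
      exact ⟨j + 1, x, t', by simpa using h1, h2, by rw [h3]; congr 1; omega⟩

theorem vertices_node (ts : List PTree) :
    vertices (node ts) = [] :: verticesListAux ts [] 0 := by
  rw [vertices, verticesAux]

theorem nonRootVertices_node (ts : List PTree) :
    nonRootVertices (node ts) = verticesListAux ts [] 0 := by
  rw [nonRootVertices, vertices_node, List.tail_cons]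

theorem length_nrv (T : PTree) : (nonRootVertices T).length = size T - 1 := by
  obtain ⟨ts⟩ := T
  rw [nonRootVertices_node, length_vla, size_node]; omega

theorem nrv_cons (t : PTree) (ts : List PTree) :
    nonRootVertices (node (t :: ts)) =
      ([0] :: (nonRootVertices t).map (0 :: ·)) ++ (nonRootVertices (node ts)).map inc := by
  rw [nonRootVertices_node, verticesListAux]
  simp only [List.nil_append]
  rw [vshift t [0], nonRootVertices_node, vla_shift ts 0]
  have : vertices t = [] :: nonRootVertices t := by
    obtain ⟨us⟩ := t
    rw [vertices_node, nonRootVertices_node]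
  rw [show verticesAux t [] = vertices t from rfl, this]
  simp

theorem mem_nrv_ne_nil {T : PTree} {w : List ℕ} (h : w ∈ nonRootVertices T) : w ≠ [] := by
  obtain ⟨ts⟩ := T
  rw [nonRootVertices_node] at h
  obtain ⟨j, x, t', -, -, h3⟩ := mem_vla ts 0 w h
  simp [h3]

end PTreeAux

namespace PTreeAux
open PTree

/-! ### rot, eseq, IsBin -/

def eseq : PTree → List (List ℕ)
  | .node [] => []
  | .node (t :: ts) => (eseq (node ts)).map (1 :: ·) ++ [] :: (eseq t).map (0 :: ·)

def rseq : PTree → List (List ℕ)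
  | .node [b0, b1] => (rseq b1).map (1 :: ·) ++ [] :: (rseq b0).map (0 :: ·)
  | _ => []

inductive IsBin : PTree → Prop
  | leaf : IsBin (node [])
  | branch {a b : PTree} : IsBin a → IsBin b → IsBin (node [a, b])

theorem isBin_rot : ∀ T, IsBin (rot T) := by
  intro T
  induction T using rot.induct with
  | case1 => rw [rot]; exact IsBin.leaf
  | case2 t ts ih1 ih2 => rw [rot]; exact IsBin.branch ih1 ih2

theorem rseq_rot : ∀ T, rseq (rot T) = eseq T := by
  intro T
  induction T using rot.induct with
  | case1 => simp [rot, rseq, eseq]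
  | case2 t ts ih1 ih2 => simp [rot, rseq, eseq, ih1, ih2]

theorem length_eseq : ∀ T, (eseq T).length = size T - 1 := by
  intro T
  induction T using rot.induct with
  | case1 => simp [eseq, size, sizeList]
  | case2 t ts ih1 ih2 =>
    have h1 := size_pos t
    have h2 := size_pos (node ts)
    have hs : size (node (t :: ts)) = size t + size (node ts) := by
      rw [size_node, size_node, sizeList_cons]; omega
    simp only [eseq, List.length_append, List.length_map, List.length_cons, ih1, ih2, hs]
    omega

/-! ### isInternal lemmas -/

theorem isInternal_cons (b0 b1 : PTree) (j : ℕ) (p : List ℕ) :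
    isInternal (node [b0, b1]) (j :: p) =
      if j = 0 then isInternal b0 p else if j = 1 then isInternal b1 p else false := by
  rcases j with _ | _ | j <;>
    simp [isInternal, subtreeAt]

theorem isInternal_root (ts : List PTree) :
    isInternal (node ts) [] = !ts.isEmpty := by
  cases ts <;> simp [isInternal, subtreeAt]

/-! ### internalVertices of rot -/

theorem internalVertices_node2 (b0 b1 : PTree) :
    internalVertices (node [b0, b1]) =
      [] :: (internalVertices b0).map (0 :: ·) ++ (internalVertices b1).map (1 :: ·) := by
  rw [internalVertices, vertices_node, verticesListAux, verticesListAux, verticesListAux]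
  simp only [List.nil_append, List.append_nil]
  rw [vshift b0 [0], vshift b1 [1]]
  rw [List.filter_cons]
  have h0 : isInternal (node [b0, b1]) [] = true := by rw [isInternal_root]; rfl
  rw [h0]
  simp only [List.filter_append, List.filter_map, internalVertices]
  congr 2

theorem internalVertices_leaf : internalVertices (node []) = [] := by
  rw [internalVertices, vertices_node, verticesListAux, List.filter_cons]
  have h0 : isInternal (node []) [] = false := by rw [isInternal_root]; rfl
  rw [h0]; rfl

theorem internalVertices_rot_cons (t : PTree) (ts : List PTree) :
    internalVertices (rot (node (t :: ts))) =
      [] :: (internalVertices (rot t)).map (0 :: ·)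
        ++ (internalVertices (rot (node ts))).map (1 :: ·) := by
  rw [rot, internalVertices_node2]

theorem length_internalVertices_rot : ∀ T, (internalVertices (rot T)).length = size T - 1 := by
  intro T
  induction T using rot.induct with
  | case1 => rw [rot, internalVertices_leaf]; simp [size, sizeList]
  | case2 t ts ih1 ih2 =>
    have h1 := size_pos t
    have h2 := size_pos (node ts)
    have hs : size (node (t :: ts)) = size t + size (node ts) := by
      rw [size_node, size_node, sizeList_cons]; omega
    rw [internalVertices_rot_cons]
    simp only [List.length_append, List.length_cons, List.length_map, ih1, ih2, hs]
    omega

end PTreeAux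

namespace PTreeAux
open PTree

/-! ### getD helpers -/

theorem getD_append_left {α} [Inhabited α] (l1 l2 : List α) (k : ℕ) (h : k < l1.length) (d : α) :
    (l1 ++ l2).getD k d = l1.getD k d := by
  rw [List.getD_eq_getElem?_getD, List.getD_eq_getElem?_getD, List.getElem?_append_left h]

theorem getD_append_right_len {α} [Inhabited α] (l1 l2 : List α) (k : ℕ) (d : α) :
    (l1 ++ l2).getD (l1.length + k) d = l2.getD k d := by
  rw [List.getD_eq_getElem?_getD, List.getD_eq_getElem?_getD,
    List.getElem?_append_right (by omega)]
  congr 2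
  omega

theorem getD_map_cons (c : ℕ) (l : List (List ℕ)) (k : ℕ) (h : k < l.length) :
    (l.map (c :: ·)).getD k [] = c :: l.getD k [] := by
  rw [List.getD_eq_getElem?_getD, List.getD_eq_getElem?_getD, List.getElem?_map,
    List.getElem?_eq_getElem h]
  rfl

/-! ### indexOf helpers -/

theorem indexOf_cons' (a b : List ℕ) (l : List (List ℕ)) :
    List.idxOf b (a :: l) = if a = b then 0 else List.idxOf b l + 1 := by
  rw [List.idxOf_cons]
  by_cases h : a = b
  · simp [h]
  · have : (a == b) = false := by simpa using h
    simp [this, h]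

theorem indexOf_append_mem : ∀ (l1 l2 : List (List ℕ)) (b : List ℕ), b ∈ l1 →
    List.idxOf b (l1 ++ l2) = List.idxOf b l1
  | [], _, b, h => by simp at h
  | a :: l1, l2, b, h => by
    rw [List.cons_append, indexOf_cons', indexOf_cons']
    by_cases hab : a = b
    · simp [hab]
    · rw [if_neg hab, if_neg hab, indexOf_append_mem l1 l2 b (by
        rcases List.mem_cons.1 h with h | h
        · exact absurd h.symm hab
        · exact h)]

theorem indexOf_append_not_mem : ∀ (l1 l2 : List (List ℕ)) (b : List ℕ), b ∉ l1 →
    List.idxOf b (l1 ++ l2) = l1.length + List.idxOf b l2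
  | [], _, b, h => by simp
  | a :: l1, l2, b, h => by
    have hab : a ≠ b := fun hh => h (by simp [hh])
    rw [List.cons_append, indexOf_cons', if_neg hab,
      indexOf_append_not_mem l1 l2 b (fun hh => h (by simp [hh]))]
    simp [List.length_cons]
    omega

theorem indexOf_lt_of_mem : ∀ (l : List (List ℕ)) (b : List ℕ), b ∈ l →
    List.idxOf b l < l.length
  | [], b, h => by simp at h
  | a :: l, b, h => by
    rw [indexOf_cons']
    by_cases hab : a = b
    · simp [hab]
    · rw [if_neg hab]
      have := indexOf_lt_of_mem l b (by
        rcases List.mem_cons.1 h with h | h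
        · exact absurd h.symm hab
        · exact h)
      simp
      omega

theorem indexOf_map_cons (c : ℕ) : ∀ (l : List (List ℕ)) (u : List ℕ),
    List.idxOf (c :: u) (l.map (c :: ·)) = List.idxOf u l
  | [], u => rfl
  | a :: l, u => by
    rw [List.map_cons, indexOf_cons', indexOf_cons', indexOf_map_cons c l u]
    by_cases h : a = u
    · simp [h]
    · rw [if_neg h, if_neg (by simp [h])]

theorem inc_inj {u v : List ℕ} (hu : u ≠ []) (hv : v ≠ []) (h : inc u = inc v) : u = v := by
  cases u with
  | nil => exact absurd rfl hu
  | cons a u =>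
    cases v with
    | nil => exact absurd rfl hv
    | cons b v =>
      simp only [inc, List.cons.injEq] at h
      refine congrArg₂ _ ?_ h.2
      omega

theorem indexOf_map_inc : ∀ (l : List (List ℕ)) (u : List ℕ), u ≠ [] → (∀ x ∈ l, x ≠ []) →
    List.idxOf (inc u) (l.map inc) = List.idxOf u l
  | [], u, _, _ => rfl
  | a :: l, u, hu, hl => by
    rw [List.map_cons, indexOf_cons', indexOf_cons',
      indexOf_map_inc l u hu (fun x hx => hl x (by simp [hx]))]
    by_cases h : a = u
    · simp [h]
    · have hne : inc a ≠ inc u := fun hh => h (inc_inj (hl a (by simp)) hu hh)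
      rw [if_neg h, if_neg hne]

/-! ### iota computation -/

theorem iota_zero (t : PTree) (ts : List PTree) : iota (node (t :: ts)) [0] = [] := by
  rw [iota, nrv_cons, indexOf_append_mem _ _ _ (by simp), indexOf_cons' _ _ _,
    internalVertices_rot_cons]
  rfl

theorem iota_left (t : PTree) (ts : List PTree) (u : List ℕ) (hu : u ∈ nonRootVertices t) :
    iota (node (t :: ts)) (0 :: u) = 0 :: iota t u := by
  have hne : u ≠ [] := mem_nrv_ne_nil hu
  have hk : List.idxOf u (nonRootVertices t) < (nonRootVertices t).length :=
    indexOf_lt_of_mem _ _ hu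
  have hlen : (nonRootVertices t).length = (internalVertices (rot t)).length := by
    rw [length_nrv, length_internalVertices_rot]
  rw [iota, nrv_cons,
    indexOf_append_mem _ _ _ (by simp only [List.mem_cons, List.mem_map]; right; exact ⟨u, hu, rfl⟩),
    indexOf_cons' _ _ _, if_neg (by simp [hne]), indexOf_map_cons,
    internalVertices_rot_cons]
  rw [getD_append_left _ _ _ (by simp only [List.length_cons, List.length_map, ← hlen]; omega),
    List.getD_cons_succ,
    getD_map_cons _ _ _ (by rw [← hlen]; exact hk), iota]

theorem iota_right (t : PTree) (ts : List PTree) (u : List ℕ)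
    (hu : u ∈ nonRootVertices (node ts)) :
    iota (node (t :: ts)) (inc u) = 1 :: iota (node ts) u := by
  have hne : u ≠ [] := mem_nrv_ne_nil hu
  have hk : List.idxOf u (nonRootVertices (node ts)) < (nonRootVertices (node ts)).length :=
    indexOf_lt_of_mem _ _ hu
  have hlen : (nonRootVertices (node ts)).length = (internalVertices (rot (node ts))).length := by
    rw [length_nrv, length_internalVertices_rot]
  obtain ⟨j, x, rfl⟩ : ∃ j x, u = j :: x := by
    cases u with
    | nil => exact absurd rfl hne
    | cons j x => exact ⟨j, x, rfl⟩
  have hnotmem : inc (j :: x) ∉ ([0] :: (nonRootVertices t).map (0 :: ·)) := by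
    simp only [inc, List.mem_cons, List.mem_map]
    push_neg
    constructor
    · simp
    · rintro y - hy
      simp at hy
  rw [iota, nrv_cons, indexOf_append_not_mem _ _ _ hnotmem,
    indexOf_map_inc _ _ hne (fun x hx => mem_nrv_ne_nil hx),
    internalVertices_rot_cons]
  have hlt : 1 ≤ size t := size_pos t
  have hnt : (nonRootVertices t).length = size t - 1 := length_nrv t
  have hit : ((internalVertices (rot t)).map (0 :: ·)).length = size t - 1 := by
    rw [List.length_map, length_internalVertices_rot]
  have harith : ([0] :: (nonRootVertices t).map (0 :: ·)).length +
      List.idxOf (j :: x) (nonRootVertices (node ts))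
      = ([] :: (internalVertices (rot t)).map (0 :: ·)).length +
        List.idxOf (j :: x) (nonRootVertices (node ts)) := by
    simp only [List.length_cons, List.length_map, hnt, length_internalVertices_rot]
  rw [harith, getD_append_right_len,
    getD_map_cons _ _ _ (by rw [← hlen]; exact hk), iota]

end PTreeAux

namespace PTreeAux
open PTree

/-! ### wlist: the mirrored enumeration as a list -/

def wl (T : PTree) : List (List ℕ) := (nonRootVertices T).map (mirrorPath T)

def wlist (T : PTree) : List (List ℕ) := wl (mirror T)

theorem verticesAux_nil_eq (t : PTree) : verticesAux t [] = [] :: nonRootVertices t := by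
  obtain ⟨ts⟩ := t
  rw [verticesAux, nonRootVertices_node]

theorem vla_append : ∀ (us : List PTree) (u : PTree) (i : ℕ),
    verticesListAux (us ++ [u]) [] i = verticesListAux us [] i ++ verticesAux u [i + us.length]
  | [], u, i => by
    simp [verticesListAux]
  | v :: us, u, i => by
    rw [List.cons_append, verticesListAux, verticesListAux, vla_append us u (i + 1)]
    have h : i + (v :: us).length = i + 1 + us.length := by
      simp only [List.length_cons]; omega
    rw [h, List.append_assoc]

theorem mirrorPath_cons (ts : List PTree) (i : ℕ) (p : List ℕ) :
    mirrorPath (node ts) (i :: p) =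
      (ts.length - 1 - i) ::
        (match ts[i]? with
         | some t => mirrorPath t p
         | none => p) := by
  rw [mirrorPath]

theorem mirrorPath_nil (t : PTree) : mirrorPath t [] = [] := by
  obtain ⟨ts⟩ := t
  rw [mirrorPath]

theorem wl_snoc (us : List PTree) (u : PTree) :
    wl (node (us ++ [u])) = (wl (node us)).map inc ++ [0] :: (wl u).map (0 :: ·) := by
  rw [wl, nonRootVertices_node, vla_append us u 0, List.map_append]
  congr 1
  · rw [wl, nonRootVertices_node, List.map_map]
    apply List.map_congr_left
    intro w hw
    obtain ⟨j, x, t', h1, hx, rfl⟩ := mem_vla us 0 w hw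
    have hj : j < us.length := by
      by_contra hj
      rw [List.getElem?_eq_none (by omega)] at h1
      cases h1
    have h2 : (us ++ [u])[j]? = some t' := by
      rw [List.getElem?_append_left hj]; exact h1
    simp only [Nat.zero_add, Function.comp_apply]
    rw [mirrorPath_cons, mirrorPath_cons, h1, h2]
    simp only [inc, List.length_append, List.length_cons, List.length_nil]
    congr 1
    omega
  · rw [Nat.zero_add, vshift u [us.length], verticesAux_nil_eq]
    simp only [List.map_cons, List.map_map, List.append_nil]
    have hu : (us ++ [u])[us.length]? = some u := by
      rw [List.getElem?_append_right (le_refl _)]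
      simp
    have hlen : (us ++ [u]).length - 1 - us.length = 0 := by
      simp [List.length_append]
    congr 1
    · rw [mirrorPath_cons, hu, hlen]
      simp [mirrorPath_nil]
    · rw [wl, List.map_map]
      apply List.map_congr_left
      intro x hx
      simp only [Function.comp_apply]
      rw [show [us.length] ++ x = us.length :: x from rfl, mirrorPath_cons, hu, hlen]

theorem mirror_node (ts : List PTree) : mirror (node ts) = node (mirrorList ts) := by
  rw [mirror]

theorem wlist_nil : wlist (node []) = [] := by
  rw [wlist, mirror_node, mirrorList, wl, nonRootVertices_node, verticesListAux, List.map_nil]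

theorem wlist_cons (t : PTree) (ts : List PTree) :
    wlist (node (t :: ts)) = (wlist (node ts)).map inc ++ [0] :: (wlist t).map (0 :: ·) := by
  rw [wlist, mirror_node, mirrorList, wl_snoc, ← mirror_node, ← wlist, ← wlist]

theorem wlist_sub : ∀ T, ∀ w ∈ wlist T, w ∈ nonRootVertices T := by
  intro T
  induction T using rot.induct with
  | case1 => rw [wlist_nil]; intro w h; simp at h
  | case2 t ts ih1 ih2 =>
    intro w hw
    rw [wlist_cons] at hw
    rw [nrv_cons]
    rcases List.mem_append.1 hw with hw | hw
    · obtain ⟨u, hu, rfl⟩ := List.mem_map.1 hw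
      exact List.mem_append.2 (Or.inr (List.mem_map.2 ⟨u, ih2 u hu, rfl⟩))
    · rcases List.mem_cons.1 hw with hw | hw
      · subst hw
        exact List.mem_append.2 (Or.inl (by simp))
      · obtain ⟨x, hx, rfl⟩ := List.mem_map.1 hw
        exact List.mem_append.2 (Or.inl (by
          simp only [List.mem_cons, List.mem_map]
          right; exact ⟨x, ih1 x hx, rfl⟩))

theorem map_iota_wlist : ∀ T, (wlist T).map (iota T) = eseq T := by
  intro T
  induction T using rot.induct with
  | case1 => rw [wlist_nil, eseq, List.map_nil]
  | case2 t ts ih1 ih2 =>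
    rw [wlist_cons, eseq, List.map_append, List.map_cons, List.map_map, List.map_map]
    congr 1
    · rw [← ih2, List.map_map]
      apply List.map_congr_left
      intro u hu
      simp only [Function.comp_apply]
      exact iota_right t ts u (wlist_sub (node ts) u hu)
    · rw [iota_zero]
      congr 1
      rw [← ih1, List.map_map]
      apply List.map_congr_left
      intro x hx
      simp only [Function.comp_apply]
      exact iota_left t ts x (wlist_sub t x hx)

theorem length_wlist (T : PTree) : (wlist T).length = size T - 1 := by
  rw [wlist, wl, List.length_map, length_nrv, size_mirror]

end PTreeAux

namespace PTreeAux
open PTree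

/-! ### right/left spine lengths -/

def oc : PTree → ℕ
  | .node [] => 0
  | .node [_] => 0
  | .node (_ :: .node [] :: _) => 0
  | .node (_ :: t@(.node (_ :: _)) :: _) => oc t + 1

def zc : PTree → ℕ
  | .node [] => 0
  | .node (.node [] :: _) => 0
  | .node (t@(.node (_ :: _)) :: _) => zc t + 1

theorem oc_leaf : oc (node []) = 0 := by rw [oc]
theorem oc_branch_leaf (a : PTree) (r : List PTree) : oc (node (a :: node [] :: r)) = 0 := by
  rw [oc]
theorem oc_branch_int (a : PTree) (c : PTree) (cs : List PTree) (r : List PTree) :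
    oc (node (a :: node (c :: cs) :: r)) = oc (node (c :: cs)) + 1 := by rw [oc]

theorem zc_leaf : zc (node []) = 0 := by rw [zc]
theorem zc_branch_leaf (r : List PTree) : zc (node (node [] :: r)) = 0 := by rw [zc]
theorem zc_branch_int (c : PTree) (cs : List PTree) (r : List PTree) :
    zc (node (node (c :: cs) :: r)) = zc (node (c :: cs)) + 1 := by rw [zc]

def kids : PTree → List PTree
  | .node ts => ts

theorem subtreeAt_snoc (B : PTree) (p : List ℕ) (t : PTree) (j : ℕ)
    (h : subtreeAt p B = some t) : subtreeAt (p ++ [j]) B = (kids t)[j]? := by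
  rw [subtreeAt_append, h, Option.bind_some]
  obtain ⟨ts⟩ := t
  rw [subtreeAt, kids]
  cases ts[j]? <;> simp [subtreeAt]

/-! ### descendR spec -/

theorem descendR_spec : ∀ (F : ℕ) (B : PTree) (p : List ℕ) (t : PTree),
    subtreeAt p B = some t → oc t ≤ F → descendR B F p = p ++ List.replicate (oc t) 1 := by
  intro F
  induction F with
  | zero =>
    intro B p t h hoc
    interval_cases h' : oc t
    · rw [descendR, List.replicate_zero, List.append_nil]
  | succ F ih =>
    intro B p t h hoc
    obtain ⟨vs⟩ := t
    have hsub : subtreeAt (p ++ [1]) B = vs[1]? := subtreeAt_snoc B p _ 1 h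
    rcases hvs : vs with _ | ⟨a, _ | ⟨⟨bs⟩, r⟩⟩
    · subst hvs
      have hint : isInternal B (p ++ [1]) = false := by
        rw [isInternal, hsub]; simp
      rw [descendR, hint, if_neg (by simp), oc_leaf, List.replicate_zero, List.append_nil]
    · subst hvs
      have hint : isInternal B (p ++ [1]) = false := by
        rw [isInternal, hsub]; simp
      rw [descendR, hint, if_neg (by simp), oc, List.replicate_zero, List.append_nil]
    · subst hvs
      rcases bs with _ | ⟨c, cs⟩
      · have hint : isInternal B (p ++ [1]) = false := by
          rw [isInternal, hsub]; simp
        rw [descendR, hint, if_neg (by simp), oc_branch_leaf, List.replicate_zero,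
          List.append_nil]
      · have hint : isInternal B (p ++ [1]) = true := by
          rw [isInternal, hsub]; simp
        have hsub2 : subtreeAt (p ++ [1]) B = some (node (c :: cs)) := by
          rw [hsub]; simp
        rw [oc_branch_int] at hoc ⊢
        rw [descendR, hint, if_pos rfl, ih B (p ++ [1]) (node (c :: cs)) hsub2 (by omega)]
        rw [List.replicate_succ, List.append_assoc]
        rfl

theorem oc_le_size : ∀ t : PTree, oc t ≤ size t := by
  intro t
  induction t using oc.induct with
  | case1 => rw [oc_leaf]; omega
  | case2 a => rw [oc]; omega
  | case3 a r => rw [oc_branch_leaf]; omega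
  | case4 a c cs r ih =>
    rw [oc_branch_int]
    have h1 := size_pos a
    have h2 : size (node (a :: node (c :: cs) :: r)) =
        1 + (size a + (size (node (c :: cs)) + sizeList r)) := by
      rw [size_node, sizeList_cons, sizeList_cons]
    omega

/-! ### ascend spec -/

theorem ascend_spec : ∀ (m : ℕ) (F : ℕ) (v : List (List ℕ)) (q : List ℕ),
    (∀ j, j < m → q ++ 1 :: List.replicate j 0 ∈ v) → q ∉ v → m + 1 ≤ F →
    ascend v F (q ++ 1 :: List.replicate m 0) = q := by
  intro m
  induction m with
  | zero =>
    intro F v q hj hq hF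
    obtain ⟨F, rfl⟩ : ∃ F', F = F' + 1 := ⟨F - 1, by omega⟩
    rw [List.replicate_zero, ascend, List.dropLast_concat, if_neg hq]
  | succ m ih =>
    intro F v q hj hq hF
    obtain ⟨F, rfl⟩ : ∃ F', F = F' + 1 := ⟨F - 1, by omega⟩
    have hsplit : q ++ 1 :: List.replicate (m + 1) 0 = (q ++ 1 :: List.replicate m 0) ++ [0] := by
      rw [List.replicate_succ' (n := m) (a := 0)]
      simp
    rw [hsplit, ascend, List.dropLast_concat, if_pos (hj m (by omega))]
    exact ih F v q (fun j hjm => hj j (by omega)) hq (by omega)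

/-! ### rseq structure lemmas -/

theorem rseq_leaf : rseq (node []) = [] := by
  rw [rseq]
  intro b0 b1 h
  injection h with h'
  simp at h'

theorem rseq_branch (a b : PTree) :
    rseq (node [a, b]) = (rseq b).map (1 :: ·) ++ [] :: (rseq a).map (0 :: ·) := by rw [rseq]

theorem rseq_head : ∀ {B}, IsBin B → B ≠ node [] →
    (rseq B).head? = some (List.replicate (oc B) 1) := by
  intro B h
  induction h with
  | leaf => intro hne; exact absurd rfl hne
  | @branch a' b' ha hb iha ihb =>
    intro _
    rw [rseq_branch]
    rcases hb with _ | @⟨x, y, hx, hy⟩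
    · rw [rseq_leaf, List.map_nil, List.nil_append, List.head?_cons, oc_branch_leaf,
        List.replicate_zero]
    · have hne2 : rseq (node [x, y]) ≠ [] := by rw [rseq_branch]; simp
      have hh := ihb (by simp)
      rw [List.head?_append, List.head?_map, hh, oc_branch_int]
      simp [List.replicate_succ]

theorem rseq_last : ∀ {B}, IsBin B → B ≠ node [] →
    (rseq B).getLast? = some (List.replicate (zc B) 0) := by
  intro B h
  induction h with
  | leaf => intro hne; exact absurd rfl hne
  | @branch a' b' ha hb iha ihb =>
    intro _
    rw [rseq_branch, List.getLast?_append]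
    rcases ha with _ | @⟨x, y, hx, hy⟩
    · rw [rseq_leaf, List.map_nil, zc_branch_leaf, List.replicate_zero]
      rfl
    · have hh := iha (by simp)
      rw [show ([] :: (rseq (node [x, y])).map (0 :: ·)).getLast? =
          ((rseq (node [x, y])).map (0 :: ·)).getLast?.or (some []) by
            rw [show ([] :: (rseq (node [x, y])).map (0 :: ·) : List (List ℕ)) =
              [([] : List ℕ)] ++ (rseq (node [x, y])).map (0 :: ·) from rfl, List.getLast?_append]
            rfl]
      rw [List.getLast?_map, hh, zc_branch_int]
      simp [List.replicate_succ]

theorem rseq_zmem : ∀ {B}, IsBin B → B ≠ node [] → ∀ j, j ≤ zc B →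
    List.replicate j 0 ∈ rseq B := by
  intro B h
  induction h with
  | leaf => intro hne; exact absurd rfl hne
  | @branch a' b' ha hb iha ihb =>
    intro _ j hj
    rw [rseq_branch]
    cases j with
    | zero =>
      rw [List.replicate_zero]
      exact List.mem_append.2 (Or.inr (by simp))
    | succ j =>
      rcases ha with _ | @⟨x, y, hx, hy⟩
      · rw [zc_branch_leaf] at hj; omega
      · rw [zc_branch_int] at hj
        have := iha (by simp) j (by omega)
        rw [List.replicate_succ]
        exact List.mem_append.2 (Or.inr (by
          simp only [List.mem_cons, List.mem_map]
          right; exact ⟨List.replicate j 0, this, rfl⟩))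

theorem zc_not_internal : ∀ {B}, IsBin B →
    isInternal B (List.replicate (zc B) 0 ++ [0]) = false := by
  intro B h
  induction h with
  | leaf => rw [zc_leaf, List.replicate_zero, List.nil_append]; simp [isInternal, subtreeAt]
  | @branch a' b' ha hb iha ihb =>
    rcases ha with _ | @⟨x, y, hx, hy⟩
    · rw [zc_branch_leaf, List.replicate_zero, List.nil_append]
      simp [isInternal, subtreeAt]
    · rw [zc_branch_int, List.replicate_succ, List.cons_append, isInternal_cons]
      simpa using iha

theorem rseq_mem_len : ∀ {B}, IsBin B → ∀ p ∈ rseq B, p.length ≤ size B := by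
  intro B h
  induction h with
  | leaf => intro p hp; rw [rseq_leaf] at hp; simp at hp
  | @branch a' b' ha hb iha ihb =>
    intro p hp
    have hsz : size (node [a', b']) = 1 + (size a' + (size b' + 0)) := by
      rw [size_node, sizeList_cons, sizeList_cons, sizeList]
    rw [rseq_branch] at hp
    rcases List.mem_append.1 hp with hp | hp
    · obtain ⟨q, hq, rfl⟩ := List.mem_map.1 hp
      have := ihb q hq
      have := size_pos a'
      simp only [List.length_cons]
      omega
    · rcases List.mem_cons.1 hp with hp | hp
      · subst hp
        simp only [List.length_nil]
        omega
      · obtain ⟨q, hq, rfl⟩ := List.mem_map.1 hp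
        have := iha q hq
        have := size_pos b'
        simp only [List.length_cons]
        omega

end PTreeAux

namespace PTreeAux
open PTree

theorem subtreeAt_cons0 (a b : PTree) (x : List ℕ) :
    subtreeAt (0 :: x) (node [a, b]) = subtreeAt x a := by
  rw [subtreeAt]; simp

theorem subtreeAt_cons1 (a b : PTree) (x : List ℕ) :
    subtreeAt (1 :: x) (node [a, b]) = subtreeAt x b := by
  rw [subtreeAt]; simp

theorem isInternal_cons0 (a b : PTree) (x : List ℕ) :
    isInternal (node [a, b]) (0 :: x) = isInternal a x := by
  rw [isInternal, isInternal, subtreeAt_cons0]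

theorem isInternal_cons1 (a b : PTree) (x : List ℕ) :
    isInternal (node [a, b]) (1 :: x) = isInternal b x := by
  rw [isInternal, isInternal, subtreeAt_cons1]

theorem getD_zero_head {l : List (List ℕ)} {x : List ℕ} (h : l.head? = some x) :
    l.getD 0 [] = x := by
  cases l with
  | nil => simp at h
  | cons a l => simp at h; simp [h]

theorem getD_last {l : List (List ℕ)} {x : List ℕ} (h : l.getLast? = some x) (k : ℕ)
    (hk : k + 1 = l.length) : l.getD k [] = x := by
  rw [List.getLast?_eq_getElem?] at h
  rw [List.getD_eq_getElem?_getD, show k = l.length - 1 by omega, h]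
  rfl

/-- the key successor lemma for the rightmost enumeration -/
theorem succ_spec : ∀ {B}, IsBin B → ∀ k, k + 1 < (rseq B).length →
    (isInternal B ((rseq B).getD k [] ++ [0]) = true →
      ∃ t, subtreeAt ((rseq B).getD k [] ++ [0]) B = some t ∧
        (rseq B).getD (k+1) [] = (rseq B).getD k [] ++ 0 :: List.replicate (oc t) 1) ∧
    (isInternal B ((rseq B).getD k [] ++ [0]) = false →
      ∃ m, (rseq B).getD k [] = (rseq B).getD (k+1) [] ++ 1 :: List.replicate m 0 ∧
        (∀ j, j < m →
          (rseq B).getD (k+1) [] ++ 1 :: List.replicate j 0 ∈ (rseq B).take (k+1)) ∧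
        (rseq B).getD (k+1) [] ∉ (rseq B).take (k+1)) := by
  intro B h
  induction h with
  | leaf =>
    intro k hk
    rw [rseq_leaf] at hk
    simp at hk
  | @branch a' b' ha hb iha ihb =>
    intro k hk
    have hrb := rseq_branch a' b'
    set R1 := rseq b' with hR1
    set R0 := rseq a' with hR0
    set n1 := R1.length with hn1
    have hlen : (rseq (node [a', b'])).length = n1 + 1 + R0.length := by
      rw [hrb]; simp; omega
    have hget1 : ∀ i, i < n1 → (rseq (node [a', b'])).getD i [] = 1 :: R1.getD i [] := by
      intro i hi
      rw [hrb, getD_append_left _ _ _ (by simpa using hi), getD_map_cons _ _ _ hi]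
    have hgetmid : (rseq (node [a', b'])).getD n1 [] = [] := by
      rw [hrb, show n1 = (R1.map (1 :: ·)).length + 0 by simp [hn1], getD_append_right_len]
      rfl
    have hget0 : ∀ i, i < R0.length →
        (rseq (node [a', b'])).getD (n1 + 1 + i) [] = 0 :: R0.getD i [] := by
      intro i hi
      rw [hrb, show n1 + 1 + i = (R1.map (1 :: ·)).length + (i + 1) by simp; omega,
        getD_append_right_len, List.getD_cons_succ, getD_map_cons _ _ _ hi]
    have htake1 : ∀ i, i ≤ n1 →
        (rseq (node [a', b'])).take i = (R1.take i).map (1 :: ·) := by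
      intro i hi
      rw [hrb, List.take_append, List.map_take,
        show i - (R1.map (1 :: ·)).length = 0 by simp; omega, List.take_zero, List.append_nil]
    have htake0 : ∀ i, i ≤ R0.length →
        (rseq (node [a', b'])).take (n1 + 1 + i) =
          R1.map (1 :: ·) ++ [] :: (R0.take i).map (0 :: ·) := by
      intro i hi
      rw [hrb, List.take_append,
        List.take_of_length_le (by simp; omega),
        show n1 + 1 + i - (R1.map (1 :: ·)).length = i + 1 by simp; omega,
        List.take_succ_cons, List.map_take]
    rcases Nat.lt_or_ge (k + 1) n1 with hc1 | hge1
    · -- both indices inside the b' block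
      have hkn : k < n1 := by omega
      obtain ⟨IH1, IH2⟩ := ihb k (by omega)
      have hp := hget1 k hkn
      have hp' := hget1 (k+1) hc1
      have hint : isInternal (node [a', b']) ((rseq (node [a', b'])).getD k [] ++ [0]) =
          isInternal b' (R1.getD k [] ++ [0]) := by
        rw [hp, List.cons_append, isInternal_cons1]
      constructor
      · intro hI
        rw [hint] at hI
        obtain ⟨t, hsub, heq⟩ := IH1 hI
        refine ⟨t, ?_, ?_⟩
        · rw [hp, List.cons_append, subtreeAt_cons1]
          exact hsub
        · rw [hp, hp', heq, List.cons_append]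
      · intro hI
        rw [hint] at hI
        obtain ⟨m, hq, hmem, hnot⟩ := IH2 hI
        refine ⟨m, ?_, ?_, ?_⟩
        · rw [hp, hp', hq, List.cons_append]
        · intro j hj
          rw [hp', htake1 (k+1) (by omega), List.cons_append]
          exact List.mem_map.2 ⟨_, hmem j hj, rfl⟩
        · rw [hp', htake1 (k+1) (by omega)]
          intro hmm
          obtain ⟨q, hq1, hq2⟩ := List.mem_map.1 hmm
          rw [List.cons.injEq] at hq2
          exact hnot (hq2.2 ▸ hq1)
    · rcases Nat.eq_or_lt_of_le hge1 with hc2 | hgt1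
      · -- k+1 = n1 : moving from the bottom of the left spine of b' to the root
        have hb_ne : b' ≠ node [] := by
          intro hh
          have h0 : R1.length = 0 := by rw [hR1, hh, rseq_leaf]; rfl
          omega
        have hp : (rseq (node [a', b'])).getD k [] = 1 :: List.replicate (zc b') 0 := by
          rw [hget1 k (by omega)]
          congr 1
          exact getD_last (rseq_last hb hb_ne) k (by rw [← hR1]; omega)
        have hp' : (rseq (node [a', b'])).getD (k+1) [] = [] := by
          rw [← hc2]; exact hgetmid
        have hint : isInternal (node [a', b']) ((rseq (node [a', b'])).getD k [] ++ [0]) =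
            false := by
          rw [hp, List.cons_append, isInternal_cons1]
          exact zc_not_internal hb
        constructor
        · intro hI; rw [hint] at hI; exact absurd hI (by simp)
        · intro _
          refine ⟨zc b', ?_, ?_, ?_⟩
          · rw [hp, hp', List.nil_append]
          · intro j hj
            rw [hp', List.nil_append, ← hc2, htake1 n1 (le_refl _), List.take_length]
            exact List.mem_map.2 ⟨_, rseq_zmem hb hb_ne j (by omega), rfl⟩
          · rw [hp', ← hc2, htake1 n1 (le_refl _), List.take_length]
            intro hmm
            obtain ⟨q, hq1, hq2⟩ := List.mem_map.1 hmm
            cases hq2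
      · rcases Nat.eq_or_lt_of_le hgt1 with hc3 | hgt2
        · -- k = n1 : moving from the root into the left subtree
          have hR0pos : 0 < R0.length := by omega
          have ha_ne : a' ≠ node [] := by
            intro hh
            have h0 : R0.length = 0 := by rw [hR0, hh, rseq_leaf]; rfl
            omega
          have hkn1 : k = n1 := by omega
          have hp : (rseq (node [a', b'])).getD k [] = [] := by rw [hkn1]; exact hgetmid
          have hp' : (rseq (node [a', b'])).getD (k+1) [] = 0 :: R0.getD 0 [] := by
            rw [show k + 1 = n1 + 1 + 0 by omega]
            exact hget0 0 hR0pos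
          have hzero : R0.getD 0 [] = List.replicate (oc a') 1 :=
            getD_zero_head (rseq_head ha ha_ne)
          have hint : isInternal (node [a', b'])
              ((rseq (node [a', b'])).getD k [] ++ [0]) = true := by
            rw [hp, List.nil_append,
              show ([0] : List ℕ) = 0 :: ([] : List ℕ) from rfl, isInternal_cons0]
            obtain ⟨_ | ⟨c, cs⟩⟩ := a'
            · exact absurd rfl ha_ne
            · rw [isInternal_root]
              rfl
          constructor
          · intro _
            refine ⟨a', ?_, ?_⟩
            · rw [hp, List.nil_append,
                show ([0] : List ℕ) = 0 :: ([] : List ℕ) from rfl, subtreeAt_cons0, subtreeAt]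
            · rw [hp, hp', hzero, List.nil_append]
          · intro hI
            rw [hint] at hI
            exact absurd hI (by simp)
        · -- k > n1 : both indices inside the a' block
          obtain ⟨j, hjk⟩ : ∃ j, k = n1 + 1 + j := ⟨k - (n1 + 1), by omega⟩
          have hj1 : j + 1 < R0.length := by omega
          obtain ⟨IH1, IH2⟩ := iha j hj1
          have hp : (rseq (node [a', b'])).getD k [] = 0 :: R0.getD j [] := by
            rw [hjk]; exact hget0 j (by omega)
          have hp' : (rseq (node [a', b'])).getD (k+1) [] = 0 :: R0.getD (j+1) [] := by
            rw [show k + 1 = n1 + 1 + (j + 1) by omega]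
            exact hget0 (j+1) (by omega)
          have htake : (rseq (node [a', b'])).take (k+1) =
              R1.map (1 :: ·) ++ [] :: (R0.take (j+1)).map (0 :: ·) := by
            rw [show k + 1 = n1 + 1 + (j + 1) by omega]
            exact htake0 (j+1) (by omega)
          have hint : isInternal (node [a', b'])
              ((rseq (node [a', b'])).getD k [] ++ [0]) =
              isInternal a' (R0.getD j [] ++ [0]) := by
            rw [hp, List.cons_append, isInternal_cons0]
          constructor
          · intro hI
            rw [hint] at hI
            obtain ⟨t, hsub, heq⟩ := IH1 hI
            refine ⟨t, ?_, ?_⟩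
            · rw [hp, List.cons_append, subtreeAt_cons0]
              exact hsub
            · rw [hp, hp', heq, List.cons_append]
          · intro hI
            rw [hint] at hI
            obtain ⟨m, hq, hmem, hnot⟩ := IH2 hI
            refine ⟨m, ?_, ?_, ?_⟩
            · rw [hp, hp', hq, List.cons_append]
            · intro i hi
              rw [hp', htake, List.cons_append]
              refine List.mem_append.2 (Or.inr ?_)
              exact List.mem_cons.2 (Or.inr (List.mem_map.2 ⟨_, hmem i hi, rfl⟩))
            · rw [hp', htake]
              intro hmm
              rcases List.mem_append.1 hmm with hmm | hmm
              · obtain ⟨q, hq1, hq2⟩ := List.mem_map.1 hmm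
                rw [List.cons.injEq] at hq2
                omega
              · rcases List.mem_cons.1 hmm with hmm | hmm
                · cases hmm
                · obtain ⟨q, hq1, hq2⟩ := List.mem_map.1 hmm
                  rw [List.cons.injEq] at hq2
                  exact hnot (hq2.2 ▸ hq1)

end PTreeAux

namespace PTreeAux
open PTree

theorem getD_map (f : List ℕ → List ℕ) (l : List (List ℕ)) (k : ℕ) (hk : k < l.length) :
    (l.map f).getD k [] = f (l.getD k []) := by
  rw [List.getD_eq_getElem?_getD, List.getD_eq_getElem?_getD, List.getElem?_map,
    List.getElem?_eq_getElem hk]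
  rfl

theorem take_succ_getD (l : List (List ℕ)) (k : ℕ) (hk : k < l.length) :
    l.take (k+1) = l.take k ++ [l.getD k []] := by
  rw [← List.take_concat_get' l k hk]
  congr 2
  rw [List.getD_eq_getElem?_getD, List.getElem?_eq_getElem hk]
  rfl

theorem getD_mem (l : List (List ℕ)) (k : ℕ) (hk : k < l.length) : l.getD k [] ∈ l := by
  rw [List.getD_eq_getElem?_getD, List.getElem?_eq_getElem hk]
  exact List.getElem_mem hk

theorem step_none {B : PTree} (h : IsBin B) (F : ℕ) (hF : size B ≤ F)
    (hk : 0 < (rseq B).length) : descendR B F [] = (rseq B).getD 0 [] := by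
  have hne : B ≠ node [] := by
    intro hh
    rw [hh, rseq_leaf] at hk
    simp at hk
  rw [getD_zero_head (rseq_head h hne)]
  have hsub : subtreeAt [] B = some B := by rw [subtreeAt]
  have := descendR_spec F B [] B hsub (le_trans (oc_le_size B) hF)
  simpa using this

theorem step_some {B : PTree} (h : IsBin B) (F : ℕ) (hF : size B ≤ F) (k : ℕ)
    (hk : k + 1 < (rseq B).length) :
    (if isInternal B ((rseq B).getD k [] ++ [0])
      then descendR B F ((rseq B).getD k [] ++ [0])
      else ascend ((rseq B).take (k+1)) F ((rseq B).getD k [])) = (rseq B).getD (k+1) [] := by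
  obtain ⟨S1, S2⟩ := succ_spec h k hk
  by_cases hI : isInternal B ((rseq B).getD k [] ++ [0]) = true
  · rw [if_pos hI]
    obtain ⟨t, hsub, heq⟩ := S1 hI
    rw [descendR_spec F B _ t hsub
        (le_trans (oc_le_size t) (le_trans (subtreeAt_size _ _ _ hsub) hF)), heq,
      List.append_assoc]
    rfl
  · have hI' : isInternal B ((rseq B).getD k [] ++ [0]) = false := by
      simpa using hI
    rw [if_neg hI]
    obtain ⟨m, hq, hmem, hnot⟩ := S2 hI'
    have hlenp : ((rseq B).getD k []).length ≤ size B :=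
      rseq_mem_len h _ (getD_mem _ _ (by omega))
    have hm : m + 1 ≤ F := by
      rw [hq] at hlenp
      simp [List.length_append] at hlenp
      omega
    rw [hq]
    exact ascend_spec m F _ _ hmem hnot hm

theorem rightmostSeq_take {B : PTree} (h : IsBin B) :
    ∀ k, k ≤ (rseq B).length → rightmostSeq B k = (rseq B).take k := by
  intro k
  induction k with
  | zero => intro _; rw [rightmostSeq, List.take_zero]
  | succ k ih =>
    intro hk1
    have hk : k < (rseq B).length := by omega
    simp only [rightmostSeq]
    rw [ih (by omega), take_succ_getD _ k hk]
    congr 1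
    split
    · -- getLast? (take k) = none : k = 0
      rename_i heq
      have hknil : (rseq B).take k = [] := by
        cases hc : (rseq B).take k with
        | nil => rfl
        | cons a l => rw [hc] at heq; simp [List.getLast?_eq_getElem?] at heq
      have hk0 : k = 0 := by
        rcases List.take_eq_nil_iff.1 hknil with hc | hc
        · exact hc
        · rw [hc] at hk; simp at hk
      subst hk0
      rw [step_none h (size B) (le_refl _) (by omega)]
    · -- getLast? (take k) = some p
      rename_i p heq
      have hkpos : k ≠ 0 := by
        intro hh
        rw [hh] at heq
        simp at heq
      obtain ⟨j, rfl⟩ : ∃ j, k = j + 1 := ⟨k - 1, by omega⟩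
      have hpj : p = (rseq B).getD j [] := by
        rw [take_succ_getD _ j (by omega), List.getLast?_append] at heq
        simp at heq
        rw [List.getD_eq_getElem?_getD]
        exact heq.symm
      rw [hpj]
      exact congrArg (fun x => [x]) (step_some h (size B) (le_refl _) j (by omega))

end PTreeAux


-- STATEMENT 13
theorem stmt13 (T : PTree) (hT : 2 ≤ size T) (i : ℕ) (hi1 : 1 ≤ i)
    (hi2 : i ≤ size T - 1) :
    iota T (mirroredEnum T i) = (rightmostSeq (rot T) (size T - 1)).getD (i - 1) [] := by
  clear hT
  obtain ⟨i', rfl⟩ : ∃ i', i = i' + 1 := ⟨i - 1, by omega⟩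
  simp only [Nat.add_sub_cancel]
  have hbin := PTreeAux.isBin_rot T
  have hlen_r : (PTreeAux.rseq (rot T)).length = size T - 1 := by
    rw [PTreeAux.rseq_rot, PTreeAux.length_eseq]
  have h1 : rightmostSeq (rot T) (size T - 1) = PTreeAux.rseq (rot T) := by
    rw [PTreeAux.rightmostSeq_take hbin (size T - 1) (by omega), ← hlen_r, List.take_length]
  rw [h1, PTreeAux.rseq_rot, ← PTreeAux.map_iota_wlist T]
  have hib : i' < (PTreeAux.wlist T).length := by rw [PTreeAux.length_wlist]; omega
  rw [PTreeAux.getD_map _ _ _ hib]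
  congr 1
  rw [mirroredEnum]
  have hnb : i' < (nonRootVertices (mirror T)).length := by
    rw [PTreeAux.length_nrv, PTreeAux.size_mirror]; omega
  rw [show PTreeAux.wlist T = (nonRootVertices (mirror T)).map (mirrorPath (mirror T)) from rfl,
    PTreeAux.getD_map _ _ _ hnb]
  congr 1
  rw [show vertices (mirror T) = verticesAux (mirror T) [] from rfl,
    PTreeAux.verticesAux_nil_eq, List.getD_cons_succ]
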